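/- Let H be a complex Hilbert space and Z ∈ B(H). Then ‖exp(Z)‖ ≤ exp(‖Z₊‖), where Z₊ denotes the positive part (given by the continuous functional calculus) of the selfadjoint operator Re Z := ½(Z + Z*). -/

import Mathlib

/-!
Write `c = ‖Z₊‖`. Since `Re Z ≤ Z₊ ≤ c`, the numerical range satisfies `Re ⟪Z v, v⟫ ≤ c ‖v‖²`.
Along the trajectory `u(t) = exp(tZ) x` this gives `(‖u‖²)' = 2 Re ⟪Z u, u⟫ ≤ 2c ‖u‖²`,
so Grönwall's inequality yields `‖exp(Z) x‖² ≤ e^{2c} ‖x‖²`.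
-/

open ContinuousLinearMap

noncomputable section

/-- The real part `Re T = ½(T + T*)` of a bounded operator. -/
def reOp {H : Type*} [NormedAddCommGroup H] [InnerProductSpace ℂ H] [CompleteSpace H]
    (T : H →L[ℂ] H) : H →L[ℂ] H :=
  (2 : ℂ)⁻¹ • (T + adjoint T)

/-- The positive part `T₊ = (Re T)₊`, obtained by applying `t ↦ max t 0` to `Re T`
via the continuous functional calculus. -/
def posPartOp {H : Type*} [NormedAddCommGroup H] [InnerProductSpace ℂ H] [CompleteSpace H]
    (T : H →L[ℂ] H) : H →L[ℂ] H :=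
  cfc (fun t : ℝ => max t 0) (reOp T)

open NormedSpace
open scoped InnerProductSpace

section Dissipative

variable {E : Type*} [NormedAddCommGroup E] [InnerProductSpace ℂ E] [CompleteSpace E]

theorem hasDerivAt_norm_sq_exp_smul_apply (W : E →L[ℂ] E) (x : E) (t : ℝ) :
    HasDerivAt (fun s : ℝ ↦ ‖exp (s • W) x‖ ^ 2)
      (2 * (⟪W (exp (t • W) x), exp (t • W) x⟫_ℂ).re) t := by
  let _ := InnerProductSpace.rclikeToReal ℂ E
  have h := (((apply ℂ E x).restrictScalars ℝ).hasFDerivAt.comp_hasDerivAt t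
    (hasDerivAt_exp_smul_const' (𝕂 := ℝ) W t)).norm_sq
  refine h.congr_deriv ?_
  rw [real_inner_eq_re_inner ℂ, ← inner_conj_symm, RCLike.conj_re]
  rfl

theorem norm_exp_apply_le_of_re_inner_le {W : E →L[ℂ] E} {c : ℝ}
    (hW : ∀ v, (⟪W v, v⟫_ℂ).re ≤ c * ‖v‖ ^ 2) (x : E) :
    ‖exp W x‖ ≤ Real.exp c * ‖x‖ := by
  have gronwall := le_gronwallBound_of_liminf_deriv_right_le (δ := ‖x‖ ^ 2) (K := 2 * c)
    (ε := 0) (a := 0) (b := 1)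
    (fun t _ ↦ (hasDerivAt_norm_sq_exp_smul_apply W x t).continuousAt.continuousWithinAt)
    (fun t _ _ hr ↦
      (hasDerivAt_norm_sq_exp_smul_apply W x t).hasDerivWithinAt.liminf_right_slope_le hr)
    (by simp) (fun t _ ↦ by linarith [hW (exp (t • W) x)]) 1 (by simp)
  rw [gronwallBound_ε0, one_smul, sub_zero, mul_one, two_mul, Real.exp_add, ← sq, ← mul_pow,
    mul_comm] at gronwall
  exact (pow_le_pow_iff_left₀ (norm_nonneg _) (by positivity) two_ne_zero).mp gronwall

theorem norm_exp_le_of_re_inner_le {W : E →L[ℂ] E} {c : ℝ}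
    (hW : ∀ v, (⟪W v, v⟫_ℂ).re ≤ c * ‖v‖ ^ 2) : ‖exp W‖ ≤ Real.exp c :=
  opNorm_le_bound _ (Real.exp_pos c).le (norm_exp_apply_le_of_re_inner_le hW)

end Dissipative

theorem ContinuousLinearMap.re_inner_apply_le_of_le {𝕜 E : Type*} [RCLike 𝕜]
    [NormedAddCommGroup E] [InnerProductSpace 𝕜 E] {A B : E →L[𝕜] E} (h : A ≤ B) (v : E) :
    RCLike.re ⟪A v, v⟫_𝕜 ≤ RCLike.re ⟪B v, v⟫_𝕜 := by
  simpa only [sub_apply, inner_sub_left, map_sub, sub_nonneg] using h.re_inner_nonneg_left v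

section PositivePart

variable {H : Type*} [NormedAddCommGroup H] [InnerProductSpace ℂ H] [CompleteSpace H]

theorem isSelfAdjoint_reOp (T : H →L[ℂ] H) : IsSelfAdjoint (reOp T) :=
  (IsSelfAdjoint.ofNat 2).inv₀.smul (IsSelfAdjoint.add_star_self T)

theorem posPartOp_eq_posPart (T : H →L[ℂ] H) : posPartOp T = (reOp T)⁺ := by
  rw [CFC.posPart_def, cfcₙ_eq_cfc]
  rfl

theorem reOp_le_posPartOp (T : H →L[ℂ] H) : reOp T ≤ posPartOp T :=
  posPartOp_eq_posPart T ▸ CFC.le_posPart (isSelfAdjoint_reOp T)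

theorem re_inner_reOp_apply (T : H →L[ℂ] H) (v : H) :
    (⟪reOp T v, v⟫_ℂ).re = (⟪T v, v⟫_ℂ).re := by
  rw [reOp, smul_apply, inner_smul_left, add_apply, inner_add_left, adjoint_inner_left,
    ← inner_conj_symm v (T v), Complex.add_conj]
  simp

theorem re_inner_apply_le_norm_posPartOp_mul (T : H →L[ℂ] H) (v : H) :
    (⟪T v, v⟫_ℂ).re ≤ ‖posPartOp T‖ * ‖v‖ ^ 2 :=
  calc (⟪T v, v⟫_ℂ).re = (⟪reOp T v, v⟫_ℂ).re := (re_inner_reOp_apply T v).symm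
    _ ≤ (⟪posPartOp T v, v⟫_ℂ).re := re_inner_apply_le_of_le (reOp_le_posPartOp T) v
    _ ≤ ‖posPartOp T v‖ * ‖v‖ := re_inner_le_norm (𝕜 := ℂ) _ _
    _ ≤ ‖posPartOp T‖ * ‖v‖ ^ 2 := by
      rw [sq, ← mul_assoc]
      gcongr
      exact le_opNorm _ _

end PositivePart

theorem norm_exp_le_exp_norm_posPart
    {H : Type*} [NormedAddCommGroup H] [InnerProductSpace ℂ H] [CompleteSpace H]
    (Z : H →L[ℂ] H) :
    ‖NormedSpace.exp Z‖ ≤ Real.exp ‖posPartOp Z‖ :=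
  norm_exp_le_of_re_inner_le (re_inner_apply_le_norm_posPartOp_mul Z)
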